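/- arXiv:2102.11912 — 4 statements merged into one kernel-verified Lean document; each statement's English description precedes it below -/
import Mathlib

section
/- If ψ : ℝ^{n-1} × ℝ → ℝ is Lip(1,1/2) with constant b, then the graph Σ_ψ = {(x, ψ(x,t), t)} is parabolic Ahlfors–David regular: there is M = M(n,b) ≥ 1 such that for every (X,t) ∈ Σ_ψ and r > 0, M^{-1} r^{n+1} ≤ H_p^{n+1}(Σ_ψ ∩ Q_r(X,t)) ≤ M r^{n+1}. -/
/-!
The graph map `(x, t) ↦ (x, ψ(x, t), t)` is `(1 + b)`-Lipschitz for the parabolic distance and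
the projection `(x, xₙ, t) ↦ (x, t)` is `1`-Lipschitz, so `Σ_ψ ∩ Q_r` is the graph image of
a subset of a parabolic cube of size `r` and projects onto a set containing a parabolic cube of
size `r / ((1 + b)(√k + 1))`. It then suffices to know that `H_p^{k+2}(Q_r) ≈ r^{k+2}`:
from above by covering `Q_r` with `N^{k+2}` grid cells of parabolic diameter `O(r / N)`, from
below because a set of parabolic diameter `d` lies in a box of Lebesgue measure `2^{k+1} d^{k+2}`.
-/

open MeasureTheory
open scoped ENNReal NNReal

/-- Parabolic distance on `ℝⁿ × ℝ`. -/
noncomputable def pdist {n : ℕ} (p q : EuclideanSpace ℝ (Fin n) × ℝ) : ℝ :=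
  dist p.1 q.1 + Real.sqrt |p.2 - q.2|

/-- Parabolic cube of length `r` centered at `c`. -/
def pcube {n : ℕ} (c : EuclideanSpace ℝ (Fin n) × ℝ) (r : ℝ) :
    Set (EuclideanSpace ℝ (Fin n) × ℝ) :=
  {q | (∀ i, |q.1 i - c.1 i| < r) ∧ |q.2 - c.2| < r ^ 2}

/-- Parabolic diameter of a set. -/
noncomputable def pdiamS {n : ℕ} (A : Set (EuclideanSpace ℝ (Fin n) × ℝ)) : ℝ≥0∞ :=
  ⨆ (p) (_ : p ∈ A) (q) (_ : q ∈ A), ENNReal.ofReal (pdist p q)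

/-- Parabolic Hausdorff pre-measure at scale `δ`. -/
noncomputable def pHausPre {n : ℕ} (η : ℝ) (δ : ℝ≥0∞)
    (A : Set (EuclideanSpace ℝ (Fin n) × ℝ)) : ℝ≥0∞ :=
  ⨅ (cov : ℕ → Set (EuclideanSpace ℝ (Fin n) × ℝ)) (_ : A ⊆ ⋃ k, cov k)
    (_ : ∀ k, pdiamS (cov k) ≤ δ), ∑' k, pdiamS (cov k) ^ η

/-- Parabolic Hausdorff measure of homogeneous dimension `η`. -/
noncomputable def pHaus {n : ℕ} (η : ℝ) (A : Set (EuclideanSpace ℝ (Fin n) × ℝ)) : ℝ≥0∞ :=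
  ⨆ (δ : ℝ≥0∞) (_ : 0 < δ), pHausPre η δ A

open Set

lemma ENNReal.rpow_natCast_add_two (x : ℝ≥0∞) (k : ℕ) :
    x ^ ((k : ℝ) + 2) = x ^ (k + 2) := by
  rw [← ENNReal.rpow_natCast]
  push_cast
  rfl

section ParabolicHausdorff

variable {n m : ℕ}

lemma le_pdiamS {A : Set (EuclideanSpace ℝ (Fin n) × ℝ)}
    {p q : EuclideanSpace ℝ (Fin n) × ℝ} (hp : p ∈ A) (hq : q ∈ A) :
    ENNReal.ofReal (pdist p q) ≤ pdiamS A :=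
  le_iSup₂_of_le p hp (le_iSup₂_of_le q hq le_rfl)

lemma pdiamS_le_iff {A : Set (EuclideanSpace ℝ (Fin n) × ℝ)} {c : ℝ≥0∞} :
    pdiamS A ≤ c ↔ ∀ p ∈ A, ∀ q ∈ A, ENNReal.ofReal (pdist p q) ≤ c := by
  simp only [pdiamS, iSup_le_iff]

@[simp]
lemma pdiamS_empty : pdiamS (∅ : Set (EuclideanSpace ℝ (Fin n) × ℝ)) = 0 := by
  simp [pdiamS]

lemma pHausPre_anti (η : ℝ) {δ₁ δ₂ : ℝ≥0∞} (h : δ₁ ≤ δ₂)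
    (A : Set (EuclideanSpace ℝ (Fin n) × ℝ)) : pHausPre η δ₂ A ≤ pHausPre η δ₁ A :=
  le_iInf₂ fun cov hcov => le_iInf fun hd =>
    iInf₂_le_of_le cov hcov (iInf_le_of_le (fun k => (hd k).trans h) le_rfl)

lemma pHausPre_mono (η : ℝ) (δ : ℝ≥0∞) {A B : Set (EuclideanSpace ℝ (Fin n) × ℝ)}
    (h : A ⊆ B) : pHausPre η δ A ≤ pHausPre η δ B :=
  le_iInf₂ fun cov hcov => le_iInf fun hd =>
    iInf₂_le_of_le cov (h.trans hcov) (iInf_le_of_le hd le_rfl)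

lemma pHaus_mono (η : ℝ) {A B : Set (EuclideanSpace ℝ (Fin n) × ℝ)} (h : A ⊆ B) :
    pHaus η A ≤ pHaus η B :=
  iSup₂_mono fun δ _ => pHausPre_mono η δ h

lemma pHausPre_le_pHaus (η : ℝ) {δ : ℝ≥0∞} (hδ : 0 < δ)
    (A : Set (EuclideanSpace ℝ (Fin n) × ℝ)) : pHausPre η δ A ≤ pHaus η A :=
  le_iSup₂_of_le δ hδ le_rfl

lemma pHausPre_le_of_finite_cover {η : ℝ} (hη : 0 < η) {δ d : ℝ≥0∞} (hd : d ≤ δ)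
    {ι : Type*} [Fintype ι] {A : Set (EuclideanSpace ℝ (Fin n) × ℝ)}
    (s : ι → Set (EuclideanSpace ℝ (Fin n) × ℝ)) (hA : A ⊆ ⋃ i, s i)
    (hs : ∀ i, pdiamS (s i) ≤ d) :
    pHausPre η δ A ≤ Fintype.card ι * d ^ η := by
  let e := Fintype.equivFin ι
  let cov : ℕ → Set (EuclideanSpace ℝ (Fin n) × ℝ) := fun j =>
    if h : j < Fintype.card ι then s (e.symm ⟨j, h⟩) else ∅
  have hcov : ∀ i, cov (e i) = s i := fun i => by simp [cov]
  have hdiam : ∀ j, pdiamS (cov j) ≤ d := fun j => by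
    unfold cov
    split_ifs
    exacts [hs _, by simp]
  have hvanish : ∀ j ∉ Finset.range (Fintype.card ι), pdiamS (cov j) ^ η = 0 := fun j hj => by
    simp [cov, Finset.mem_range.not.1 hj, ENNReal.zero_rpow_of_pos hη]
  refine iInf₂_le_of_le cov ?_ (iInf_le_of_le (fun j => (hdiam j).trans hd) ?_)
  · refine hA.trans (iUnion_subset fun i => ?_)
    exact hcov i ▸ subset_iUnion cov (e i)
  · rw [tsum_eq_sum hvanish]
    refine (Finset.sum_le_card_nsmul _ _ (d ^ η) fun j _ =>
      ENNReal.rpow_le_rpow (hdiam j) hη.le).trans ?_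
    simp

lemma pdiamS_image_le {f : EuclideanSpace ℝ (Fin n) × ℝ → EuclideanSpace ℝ (Fin m) × ℝ}
    {L : ℝ} (hL : 0 ≤ L) (hf : ∀ p q, pdist (f p) (f q) ≤ L * pdist p q)
    (A : Set (EuclideanSpace ℝ (Fin n) × ℝ)) :
    pdiamS (f '' A) ≤ ENNReal.ofReal L * pdiamS A := by
  rw [pdiamS_le_iff]
  rintro _ ⟨p, hp, rfl⟩ _ ⟨q, hq, rfl⟩
  calc ENNReal.ofReal (pdist (f p) (f q)) ≤ ENNReal.ofReal (L * pdist p q) :=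
        ENNReal.ofReal_le_ofReal (hf p q)
    _ = ENNReal.ofReal L * ENNReal.ofReal (pdist p q) := ENNReal.ofReal_mul hL
    _ ≤ ENNReal.ofReal L * pdiamS A := mul_le_mul_right (le_pdiamS hp hq) _

lemma pHausPre_image_le
    {f : EuclideanSpace ℝ (Fin n) × ℝ → EuclideanSpace ℝ (Fin m) × ℝ} {L : ℝ} (hL : 0 < L)
    (hf : ∀ p q, pdist (f p) (f q) ≤ L * pdist p q)
    {η : ℝ} (hη : 0 < η) (δ : ℝ≥0∞) (A : Set (EuclideanSpace ℝ (Fin n) × ℝ)) :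
    pHausPre η (ENNReal.ofReal L * δ) (f '' A) ≤ ENNReal.ofReal L ^ η * pHausPre η δ A := by
  have hL0 : ENNReal.ofReal L ^ η ≠ 0 := by simp [ENNReal.rpow_eq_zero_iff, hL, hη]
  have hLt : ENNReal.ofReal L ^ η ≠ ∞ := by simp [ENNReal.rpow_eq_top_iff, hη.le]
  simp only [pHausPre, ENNReal.mul_iInf_of_ne hL0 hLt]
  refine le_iInf₂ fun cov hcov => le_iInf fun hd => ?_
  refine iInf₂_le_of_le (fun j => f '' cov j) ?_ (iInf_le_of_le (fun j => ?_) ?_)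
  · rw [image_subset_iff, preimage_iUnion]
    exact hcov.trans (iUnion_mono fun j => subset_preimage_image f _)
  · exact (pdiamS_image_le hL.le hf _).trans (mul_le_mul_right (hd j) _)
  · rw [← ENNReal.tsum_mul_left]
    refine ENNReal.tsum_le_tsum fun j => ?_
    rw [← ENNReal.mul_rpow_of_nonneg _ _ hη.le]
    exact ENNReal.rpow_le_rpow (pdiamS_image_le hL.le hf _) hη.le

lemma pHaus_image_le {f : EuclideanSpace ℝ (Fin n) × ℝ → EuclideanSpace ℝ (Fin m) × ℝ}
    {L : ℝ} (hL : 0 < L) (hf : ∀ p q, pdist (f p) (f q) ≤ L * pdist p q)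
    {η : ℝ} (hη : 0 < η) (A : Set (EuclideanSpace ℝ (Fin n) × ℝ)) :
    pHaus η (f '' A) ≤ ENNReal.ofReal L ^ η * pHaus η A := by
  refine iSup₂_le fun δ hδ => ?_
  have hδ' : 0 < δ / ENNReal.ofReal L := ENNReal.div_pos hδ.ne' ENNReal.ofReal_ne_top
  calc pHausPre η δ (f '' A)
      ≤ pHausPre η (ENNReal.ofReal L * (δ / ENNReal.ofReal L)) (f '' A) :=
        pHausPre_anti η ENNReal.mul_div_le _
    _ ≤ ENNReal.ofReal L ^ η * pHausPre η (δ / ENNReal.ofReal L) A :=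
        pHausPre_image_le hL hf hη _ A
    _ ≤ ENNReal.ofReal L ^ η * pHaus η A :=
        mul_le_mul_right (pHausPre_le_pHaus η hδ' A) _

end ParabolicHausdorff

section CubeUpperBound

variable {k : ℕ}

lemma exists_fin_mem_Ico {a h x : ℝ} (hh : 0 < h) {m : ℕ} (hx : x ∈ Ico a (a + m * h)) :
    ∃ j : Fin m, x ∈ Ico (a + j * h) (a + (j + 1) * h) := by
  have hq : 0 ≤ (x - a) / h := div_nonneg (sub_nonneg.2 hx.1) hh.le
  have hjm : ⌊(x - a) / h⌋₊ < m := by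
    rw [Nat.floor_lt hq, div_lt_iff₀ hh]
    linarith [hx.2]
  refine ⟨⟨_, hjm⟩, ?_, ?_⟩
  · have := (le_div_iff₀ hh).1 (Nat.floor_le hq)
    simp only
    linarith
  · have := (div_lt_iff₀ hh).1 (Nat.lt_floor_add_one ((x - a) / h))
    simp only
    linarith

lemma dist_le_sqrt_card_mul {x y : EuclideanSpace ℝ (Fin k)} {h : ℝ} (hh : 0 ≤ h)
    (hxy : ∀ i, |x i - y i| ≤ h) : dist x y ≤ Real.sqrt k * h := by
  have hsum : ∑ i, dist (x i) (y i) ^ 2 ≤ k * h ^ 2 := by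
    calc ∑ i, dist (x i) (y i) ^ 2 ≤ ∑ _i : Fin k, h ^ 2 :=
          Finset.sum_le_sum fun i _ => pow_le_pow_left₀ dist_nonneg (hxy i) 2
      _ = k * h ^ 2 := by simp
  rw [EuclideanSpace.dist_eq, ← Real.sqrt_sq hh, ← Real.sqrt_mul (Nat.cast_nonneg k)]
  exact Real.sqrt_le_sqrt hsum

lemma pdist_le_of_abs_sub_le {p q : EuclideanSpace ℝ (Fin k) × ℝ} {h : ℝ} (hh : 0 ≤ h)
    (hx : ∀ i, |p.1 i - q.1 i| ≤ h) (ht : |p.2 - q.2| ≤ h ^ 2) :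
    pdist p q ≤ (Real.sqrt k + 1) * h := by
  have hsqrt : Real.sqrt |p.2 - q.2| ≤ h := Real.sqrt_le_iff.2 ⟨hh, ht⟩
  have := dist_le_sqrt_card_mul hh hx
  rw [pdist]
  linarith

-- The time side `h ^ 2` makes the parabolic diameter of a cell `O(h)`.
def pcell (a : Fin k → ℝ) (s h : ℝ) (j : Fin k → ℕ) (l : ℕ) :
    Set (EuclideanSpace ℝ (Fin k) × ℝ) :=
  {q | (∀ i, q.1 i ∈ Ico (a i + j i * h) (a i + (j i + 1) * h)) ∧
    q.2 ∈ Ico (s + l * h ^ 2) (s + (l + 1) * h ^ 2)}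

lemma pdiamS_pcell_le (a : Fin k → ℝ) (s : ℝ) {h : ℝ} (hh : 0 ≤ h) (j : Fin k → ℕ)
    (l : ℕ) :
    pdiamS (pcell a s h j l) ≤ ENNReal.ofReal ((Real.sqrt k + 1) * h) := by
  have abs_sub_le {lo hi x y : ℝ} (hx : x ∈ Ico lo hi) (hy : y ∈ Ico lo hi) :
      |x - y| ≤ hi - lo :=
    abs_sub_le_iff.2 ⟨by linarith [hx.2, hy.1], by linarith [hx.1, hy.2]⟩
  rw [pdiamS_le_iff]
  rintro p ⟨hpx, hpt⟩ q ⟨hqx, hqt⟩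
  refine ENNReal.ofReal_le_ofReal (pdist_le_of_abs_sub_le hh (fun i => ?_) ?_)
  · exact (abs_sub_le (hpx i) (hqx i)).trans_eq (by ring)
  · exact (abs_sub_le hpt hqt).trans_eq (by ring)

lemma pcube_subset_iUnion_pcell (c : EuclideanSpace ℝ (Fin k) × ℝ) {r : ℝ} (hr : 0 < r)
    {N : ℕ} (hN : 0 < N) :
    pcube c r ⊆ ⋃ v : (Fin k → Fin N) × Fin (N ^ 2),
      pcell (fun i => c.1 i - r) (c.2 - r ^ 2) (2 * r / N) (fun i => v.1 i) v.2 := by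
  rintro q ⟨hqx, hqt⟩
  have hh : 0 < 2 * r / N := by positivity
  have hNh : (N : ℝ) * (2 * r / N) = 2 * r := by field_simp
  have hqx' : ∀ i, q.1 i ∈ Ico (c.1 i - r) (c.1 i - r + N * (2 * r / N)) := fun i => by
    rw [hNh]
    constructor <;> linarith [abs_lt.1 (hqx i)]
  have hqt' : q.2 ∈ Ico (c.2 - r ^ 2) (c.2 - r ^ 2 + ((N ^ 2 : ℕ) : ℝ) * (2 * r / N) ^ 2) := by
    rw [Nat.cast_pow, ← mul_pow, hNh]
    constructor <;> nlinarith [abs_lt.1 hqt]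
  choose v hv using fun i => exists_fin_mem_Ico hh (hqx' i)
  obtain ⟨w, hw⟩ := exists_fin_mem_Ico (pow_pos hh 2) hqt'
  exact mem_iUnion.2 ⟨(v, w), hv, hw⟩

lemma pHausPre_pcube_le (c : EuclideanSpace ℝ (Fin k) × ℝ) {r : ℝ} (hr : 0 < r) {N : ℕ}
    (hN : 0 < N) :
    pHausPre ((k : ℝ) + 2) (ENNReal.ofReal ((Real.sqrt k + 1) * (2 * r / N))) (pcube c r) ≤
      ENNReal.ofReal ((2 * (Real.sqrt k + 1) * r) ^ (k + 2)) := by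
  have hh : 0 ≤ 2 * r / N := by positivity
  have hh' : 0 ≤ (Real.sqrt k + 1) * (2 * r / N) := by positivity
  refine (pHausPre_le_of_finite_cover (by positivity) le_rfl _ (pcube_subset_iUnion_pcell c hr hN)
    fun v => pdiamS_pcell_le _ _ hh _ _).trans_eq ?_
  simp only [Fintype.card_prod, Fintype.card_fun, Fintype.card_fin, ← pow_add, Nat.cast_pow,
    ENNReal.rpow_natCast_add_two]
  rw [← ENNReal.ofReal_natCast, ← ENNReal.ofReal_pow (by positivity), ← ENNReal.ofReal_pow hh',
    ← ENNReal.ofReal_mul (by positivity), ← mul_pow]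
  congr 2
  field_simp

lemma pHaus_pcube_le (c : EuclideanSpace ℝ (Fin k) × ℝ) {r : ℝ} (hr : 0 < r) :
    pHaus ((k : ℝ) + 2) (pcube c r) ≤
      ENNReal.ofReal ((2 * (Real.sqrt k + 1) * r) ^ (k + 2)) := by
  refine iSup₂_le fun δ hδ => ?_
  obtain ⟨N, hN⟩ := ENNReal.exists_nat_mul_gt hδ.ne'
    (ENNReal.ofReal_ne_top (r := 2 * (Real.sqrt k + 1) * r))
  have hN0 : 0 < N := Nat.pos_of_ne_zero fun h => by simp [h] at hN
  refine (pHausPre_anti _ ?_ _).trans (pHausPre_pcube_le c hr hN0)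
  rw [show (Real.sqrt k + 1) * (2 * r / N) = 2 * (Real.sqrt k + 1) * r / N by ring,
    ENNReal.ofReal_div_of_pos (by positivity), ENNReal.ofReal_natCast]
  exact ENNReal.div_le_of_le_mul' hN.le

end CubeUpperBound

section CubeLowerBound

variable {k : ℕ}

lemma volume_preimage_ofLp_prod {s : Set (Fin k → ℝ)} (hs : MeasurableSet s) (t : Set ℝ) :
    volume ((WithLp.ofLp ⁻¹' s : Set (EuclideanSpace ℝ (Fin k))) ×ˢ t) =
      volume s * volume t := by
  rw [Measure.volume_eq_prod, Measure.prod_prod,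
    (PiLp.volume_preserving_ofLp (Fin k)).measure_preimage hs.nullMeasurableSet]

lemma volume_le_pdiamS_rpow (A : Set (EuclideanSpace ℝ (Fin k) × ℝ)) :
    volume A ≤ 2 ^ (k + 1) * pdiamS A ^ ((k : ℝ) + 2) := by
  rcases A.eq_empty_or_nonempty with rfl | ⟨p₀, hp₀⟩
  · simp
  rcases eq_or_ne (pdiamS A) ⊤ with htop | hfin
  · simp [htop, ENNReal.top_rpow_of_pos (by positivity : (0 : ℝ) < k + 2)]
  set d := (pdiamS A).toReal
  have hd : 0 ≤ d := ENNReal.toReal_nonneg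
  have hsub : A ⊆ (WithLp.ofLp ⁻¹' Metric.closedBall p₀.1.ofLp d) ×ˢ
      Metric.closedBall p₀.2 (d ^ 2) := by
    intro q hq
    have hpd : pdist q p₀ ≤ d := by
      rw [← ENNReal.ofReal_le_ofReal_iff hd, ENNReal.ofReal_toReal hfin]
      exact le_pdiamS hq hp₀
    rw [pdist] at hpd
    have hx : dist q.1 p₀.1 ≤ d := by linarith [Real.sqrt_nonneg |q.2 - p₀.2|]
    have ht : Real.sqrt |q.2 - p₀.2| ≤ d := by linarith [dist_nonneg (x := q.1) (y := p₀.1)]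
    refine ⟨?_, ?_⟩
    · exact ((PiLp.lipschitzWith_ofLp 2 _).dist_le_mul q.1 p₀.1).trans (by simpa using hx)
    · rw [Metric.mem_closedBall, Real.dist_eq]
      exact (Real.sqrt_le_left hd).1 ht
  calc volume A ≤ volume ((WithLp.ofLp ⁻¹' Metric.closedBall p₀.1.ofLp d) ×ˢ
        Metric.closedBall p₀.2 (d ^ 2)) := measure_mono hsub
    _ = 2 ^ (k + 1) * pdiamS A ^ ((k : ℝ) + 2) := by
      rw [volume_preimage_ofLp_prod Metric.isClosed_closedBall.measurableSet,
        Real.volume_pi_closedBall _ hd, Real.volume_closedBall, ← ENNReal.ofReal_toReal hfin,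
        ENNReal.rpow_natCast_add_two, ← ENNReal.ofReal_pow hd,
        ← ENNReal.ofReal_mul (by positivity)]
      simp only [Fintype.card_fin]
      rw [← ENNReal.ofReal_ofNat, ← ENNReal.ofReal_pow zero_le_two,
        ← ENNReal.ofReal_mul (by positivity)]
      ring_nf

lemma volume_le_pHaus (A : Set (EuclideanSpace ℝ (Fin k) × ℝ)) :
    volume A ≤ 2 ^ (k + 1) * pHaus ((k : ℝ) + 2) A := by
  refine le_trans ?_ (mul_le_mul_right (pHausPre_le_pHaus _ one_pos A) _)
  simp only [pHausPre, ENNReal.mul_iInf_of_ne (pow_ne_zero _ two_ne_zero)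
    (ENNReal.pow_ne_top ENNReal.ofNat_ne_top)]
  refine le_iInf₂ fun cov hcov => le_iInf fun _ => ?_
  calc volume A ≤ ∑' j, volume (cov j) := (measure_mono hcov).trans (measure_iUnion_le cov)
    _ ≤ ∑' j, 2 ^ (k + 1) * pdiamS (cov j) ^ ((k : ℝ) + 2) :=
      ENNReal.tsum_le_tsum fun j => volume_le_pdiamS_rpow _
    _ = 2 ^ (k + 1) * ∑' j, pdiamS (cov j) ^ ((k : ℝ) + 2) := ENNReal.tsum_mul_left

lemma volume_pcube (c : EuclideanSpace ℝ (Fin k) × ℝ) {r : ℝ} (hr : 0 < r) :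
    volume (pcube c r) = 2 ^ (k + 1) * ENNReal.ofReal (r ^ (k + 2)) := by
  have hcube :
      pcube c r = (WithLp.ofLp ⁻¹' Metric.ball c.1.ofLp r) ×ˢ Metric.ball c.2 (r ^ 2) := by
    ext q
    simp [pcube, dist_pi_lt_iff hr, Real.dist_eq]
  rw [hcube, volume_preimage_ofLp_prod Metric.isOpen_ball.measurableSet, Real.volume_pi_ball _ hr,
    Real.volume_ball, ← ENNReal.ofReal_mul (by positivity), ← ENNReal.ofReal_ofNat,
    ← ENNReal.ofReal_pow zero_le_two, ← ENNReal.ofReal_mul (by positivity)]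
  simp only [Fintype.card_fin]
  ring_nf

lemma ofReal_pow_le_pHaus_pcube (c : EuclideanSpace ℝ (Fin k) × ℝ) {r : ℝ} (hr : 0 < r) :
    ENNReal.ofReal (r ^ (k + 2)) ≤ pHaus ((k : ℝ) + 2) (pcube c r) := by
  have := volume_le_pHaus (pcube c r)
  rwa [volume_pcube c hr, ENNReal.mul_le_mul_iff_right (pow_ne_zero _ two_ne_zero)
    (ENNReal.pow_ne_top ENNReal.ofNat_ne_top)] at this

end CubeLowerBound

section Graph

variable {k : ℕ}

noncomputable def graphMap (ψ : EuclideanSpace ℝ (Fin k) × ℝ → ℝ) :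
    EuclideanSpace ℝ (Fin k) × ℝ → EuclideanSpace ℝ (Fin (k + 1)) × ℝ :=
  fun q => (WithLp.toLp 2 (Fin.snoc q.1.ofLp (ψ q)), q.2)

def projInit : EuclideanSpace ℝ (Fin (k + 1)) × ℝ → EuclideanSpace ℝ (Fin k) × ℝ :=
  fun q => (WithLp.toLp 2 (Fin.init q.1.ofLp), q.2)

lemma setOf_eq_range_graphMap (ψ : EuclideanSpace ℝ (Fin k) × ℝ → ℝ) :
    {p : EuclideanSpace ℝ (Fin (k + 1)) × ℝ | ∃ (x : EuclideanSpace ℝ (Fin k)) (t : ℝ),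
      p = ((WithLp.toLp 2 (Fin.snoc x.ofLp (ψ (x, t)) : Fin (k + 1) → ℝ) :
        EuclideanSpace ℝ (Fin (k + 1))), t)} = range (graphMap ψ) := by
  ext p
  constructor
  · rintro ⟨x, t, rfl⟩
    exact ⟨(x, t), rfl⟩
  · rintro ⟨⟨x, t⟩, rfl⟩
    exact ⟨x, t, rfl⟩

@[simp]
lemma projInit_graphMap (ψ : EuclideanSpace ℝ (Fin k) × ℝ → ℝ)
    (q : EuclideanSpace ℝ (Fin k) × ℝ) :
    projInit (graphMap ψ q) = q := by
  simp [projInit, graphMap]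

lemma dist_toLp_snoc_le (x y : EuclideanSpace ℝ (Fin k)) (a c : ℝ) :
    dist (WithLp.toLp 2 (Fin.snoc x.ofLp a) : EuclideanSpace ℝ (Fin (k + 1)))
      (WithLp.toLp 2 (Fin.snoc y.ofLp c)) ≤ dist x y + |a - c| := by
  rw [EuclideanSpace.dist_eq, Fin.sum_univ_castSucc]
  simp only [Fin.snoc_castSucc, Fin.snoc_last, Real.dist_eq, sq_abs]
  rw [EuclideanSpace.dist_eq x y]
  refine Real.sqrt_le_iff.2 ⟨by positivity, ?_⟩
  rw [add_sq, Real.sq_sqrt (by positivity)]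
  simp only [Real.dist_eq, sq_abs]
  nlinarith [Real.sqrt_nonneg (∑ i, (x i - y i) ^ 2), abs_nonneg (a - c)]

lemma dist_toLp_init_le (x y : EuclideanSpace ℝ (Fin (k + 1))) :
    dist (WithLp.toLp 2 (Fin.init x.ofLp) : EuclideanSpace ℝ (Fin k))
      (WithLp.toLp 2 (Fin.init y.ofLp)) ≤ dist x y := by
  rw [EuclideanSpace.dist_eq, EuclideanSpace.dist_eq, Fin.sum_univ_castSucc (n := k)]
  exact Real.sqrt_le_sqrt (le_add_of_nonneg_right (sq_nonneg _))

lemma pdist_graphMap_le {ψ : EuclideanSpace ℝ (Fin k) × ℝ → ℝ} {b : ℝ}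
    (hψ : ∀ p q, |ψ p - ψ q| ≤ b * pdist p q) (p q : EuclideanSpace ℝ (Fin k) × ℝ) :
    pdist (graphMap ψ p) (graphMap ψ q) ≤ (1 + b) * pdist p q := by
  have := dist_toLp_snoc_le p.1 q.1 (ψ p) (ψ q)
  have := hψ p q
  simp only [pdist, graphMap] at *
  nlinarith [Real.sqrt_nonneg |p.2 - q.2|]

lemma pdist_projInit_le (p q : EuclideanSpace ℝ (Fin (k + 1)) × ℝ) :
    pdist (projInit p) (projInit q) ≤ 1 * pdist p q := by
  rw [one_mul]
  exact add_le_add (dist_toLp_init_le p.1 q.1) le_rfl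

lemma range_graphMap_inter_pcube_subset (ψ : EuclideanSpace ℝ (Fin k) × ℝ → ℝ)
    (p : EuclideanSpace ℝ (Fin k) × ℝ) (r : ℝ) :
    range (graphMap ψ) ∩ pcube (graphMap ψ p) r ⊆ graphMap ψ '' pcube p r := by
  rintro _ ⟨⟨q, rfl⟩, hx, ht⟩
  refine ⟨q, ⟨fun i => ?_, ht⟩, rfl⟩
  simpa [graphMap] using hx i.castSucc

lemma pcube_subset_image_projInit {ψ : EuclideanSpace ℝ (Fin k) × ℝ → ℝ} {b : ℝ}
    (hb : 0 ≤ b) (hψ : ∀ p q, |ψ p - ψ q| ≤ b * pdist p q)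
    (p : EuclideanSpace ℝ (Fin k) × ℝ) {r ρ : ℝ}
    (hρ : 0 < ρ) (hρr : (1 + b * (Real.sqrt k + 1)) * ρ ≤ r) :
    pcube p ρ ⊆ projInit '' (range (graphMap ψ) ∩ pcube (graphMap ψ p) r) := by
  intro q hq
  have hρr' : ρ ≤ r := by nlinarith [mul_nonneg hb (Real.sqrt_nonneg k)]
  have hψq : |ψ q - ψ p| < r :=
    calc |ψ q - ψ p| ≤ b * ((Real.sqrt k + 1) * ρ) :=
          (hψ q p).trans (mul_le_mul_of_nonneg_left
            (pdist_le_of_abs_sub_le hρ.le (fun i => (hq.1 i).le) hq.2.le) hb)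
      _ < r := by linarith
  refine ⟨graphMap ψ q, ⟨mem_range_self q, fun i => ?_, ?_⟩, projInit_graphMap ψ q⟩
  · induction i using Fin.lastCases with
    | last => simpa [graphMap] using hψq
    | cast j => simpa [graphMap] using (hq.1 j).trans_le hρr'
  · exact hq.2.trans_le (pow_le_pow_left₀ hρ.le hρr' 2)

lemma ofReal_pow_le_pHaus_graph_inter_pcube {ψ : EuclideanSpace ℝ (Fin k) × ℝ → ℝ} {b : ℝ}
    (hb : 0 ≤ b) (hψ : ∀ p q, |ψ p - ψ q| ≤ b * pdist p q)
    (p : EuclideanSpace ℝ (Fin k) × ℝ) {r : ℝ} (hr : 0 < r) :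
    ENNReal.ofReal ((r / ((1 + b) * (Real.sqrt k + 1))) ^ (k + 2)) ≤
      pHaus ((k : ℝ) + 2) (range (graphMap ψ) ∩ pcube (graphMap ψ p) r) := by
  have hK : 1 + b * (Real.sqrt k + 1) ≤ (1 + b) * (Real.sqrt k + 1) := by
    nlinarith [Real.sqrt_nonneg k]
  have hK0 : 0 < (1 + b) * (Real.sqrt k + 1) := by positivity
  calc ENNReal.ofReal ((r / ((1 + b) * (Real.sqrt k + 1))) ^ (k + 2))
      ≤ pHaus ((k : ℝ) + 2) (pcube p (r / ((1 + b) * (Real.sqrt k + 1)))) :=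
        ofReal_pow_le_pHaus_pcube p (by positivity)
    _ ≤ pHaus ((k : ℝ) + 2) (projInit '' (range (graphMap ψ) ∩ pcube (graphMap ψ p) r)) :=
        pHaus_mono _ (pcube_subset_image_projInit hb hψ p (by positivity)
          ((mul_le_mul_of_nonneg_right hK (by positivity)).trans_eq (mul_div_cancel₀ r hK0.ne')))
    _ ≤ pHaus ((k : ℝ) + 2) (range (graphMap ψ) ∩ pcube (graphMap ψ p) r) := by
        simpa using pHaus_image_le one_pos pdist_projInit_le (by positivity) _

lemma pHaus_graph_inter_pcube_le {ψ : EuclideanSpace ℝ (Fin k) × ℝ → ℝ} {b : ℝ}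
    (hb : 0 ≤ b) (hψ : ∀ p q, |ψ p - ψ q| ≤ b * pdist p q)
    (p : EuclideanSpace ℝ (Fin k) × ℝ) {r : ℝ} (hr : 0 < r) :
    pHaus ((k : ℝ) + 2) (range (graphMap ψ) ∩ pcube (graphMap ψ p) r) ≤
      ENNReal.ofReal ((2 * (1 + b) * (Real.sqrt k + 1) * r) ^ (k + 2)) :=
  calc pHaus ((k : ℝ) + 2) (range (graphMap ψ) ∩ pcube (graphMap ψ p) r)
      ≤ pHaus ((k : ℝ) + 2) (graphMap ψ '' pcube p r) :=
        pHaus_mono _ (range_graphMap_inter_pcube_subset ψ p r)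
    _ ≤ ENNReal.ofReal (1 + b) ^ ((k : ℝ) + 2) * pHaus ((k : ℝ) + 2) (pcube p r) :=
        pHaus_image_le (by linarith) (pdist_graphMap_le hψ) (by positivity) _
    _ ≤ ENNReal.ofReal (1 + b) ^ ((k : ℝ) + 2) *
          ENNReal.ofReal ((2 * (Real.sqrt k + 1) * r) ^ (k + 2)) :=
        mul_le_mul_right (pHaus_pcube_le p hr) _
    _ = ENNReal.ofReal ((2 * (1 + b) * (Real.sqrt k + 1) * r) ^ (k + 2)) := by
        rw [ENNReal.rpow_natCast_add_two, ← ENNReal.ofReal_pow (by linarith),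
          ← ENNReal.ofReal_mul (by positivity), ← mul_pow]
        ring_nf

end Graph

/-- the graph of a Lip(1,1/2) function `ψ : ℝᵏ × ℝ → ℝ` with constant `b`
(a subset of `ℝ^{k+1} × ℝ`, i.e. of `ℝ^{n+1}` with `n = k+1` spatial dimensions) is
parabolic Ahlfors–David regular for the parabolic Hausdorff measure `H_p^{k+2}`,
with a constant `M = M(k,b)`. -/
theorem graph_of_parabolic_lipschitz_is_ADR (k : ℕ) (b : ℝ) (hb : 0 ≤ b) :
    ∃ M : ℝ, 1 ≤ M ∧
      ∀ ψ : EuclideanSpace ℝ (Fin k) × ℝ → ℝ,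
        (∀ p q : EuclideanSpace ℝ (Fin k) × ℝ,
          |ψ p - ψ q| ≤ b * (dist p.1 q.1 + Real.sqrt |p.2 - q.2|)) →
        ∀ p ∈ {p : EuclideanSpace ℝ (Fin (k + 1)) × ℝ |
            ∃ (x : EuclideanSpace ℝ (Fin k)) (t : ℝ),
              p = ((WithLp.toLp 2 (Fin.snoc x.ofLp (ψ (x, t)) : Fin (k + 1) → ℝ) : EuclideanSpace ℝ (Fin (k + 1))), t)},
          ∀ r : ℝ, 0 < r →
            ENNReal.ofReal (M⁻¹ * r ^ (k + 2)) ≤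
                pHaus ((k : ℝ) + 2)
                  ({p : EuclideanSpace ℝ (Fin (k + 1)) × ℝ |
                      ∃ (x : EuclideanSpace ℝ (Fin k)) (t : ℝ),
                        p = ((WithLp.toLp 2 (Fin.snoc x.ofLp (ψ (x, t)) : Fin (k + 1) → ℝ) : EuclideanSpace ℝ (Fin (k + 1))), t)} ∩
                    pcube p r) ∧
              pHaus ((k : ℝ) + 2)
                  ({p : EuclideanSpace ℝ (Fin (k + 1)) × ℝ |
                      ∃ (x : EuclideanSpace ℝ (Fin k)) (t : ℝ),
                        p = ((WithLp.toLp 2 (Fin.snoc x.ofLp (ψ (x, t)) : Fin (k + 1) → ℝ) : EuclideanSpace ℝ (Fin (k + 1))), t)} ∩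
                    pcube p r) ≤ ENNReal.ofReal (M * r ^ (k + 2)) := by
  set K := (1 + b) * (Real.sqrt k + 1) with hK
  have hK1 : 1 ≤ K := by nlinarith [Real.sqrt_nonneg k]
  refine ⟨(2 * K) ^ (k + 2), one_le_pow₀ (by linarith), fun ψ hψ p hp r hr => ?_⟩
  rw [setOf_eq_range_graphMap] at hp ⊢
  obtain ⟨p, rfl⟩ := hp
  refine ⟨le_trans ?_ (ofReal_pow_le_pHaus_graph_inter_pcube hb hψ p hr),
    (pHaus_graph_inter_pcube_le hb hψ p hr).trans_eq ?_⟩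
  · rw [← hK, div_pow, div_eq_inv_mul]
    gcongr
    linarith
  · rw [← mul_pow, hK]
    ring_nf
end

section
/- Weak time-synchronized corkscrews from flatness plus two-sided corkscrews: let Σ ⊂ ℝ^{n+1} be closed and suppose it satisfies the two-sided corkscrew condition with constant γ₀ ∈ (0,1). Let (X¹,t¹) ∈ Σ, r₁ > 0, suppose Σ ∩ Q_{10r₁}(X¹,t¹) lies within parabolic distance εr₁ of a hyperplane P parallel to the t-axis, with ε < min(1, γ₀/20). Then, after translating (X¹,t¹) to the origin and rotating so P = ℝ^{n-1}×{0}×ℝ, the cubes Q⁺ = Q_{r₁}(0, 3r₁, 0) and Q⁻ = Q_{r₁}(0, -3r₁, 0) lie in distinct connected components of ℝ^{n+1}∖Σ and have equal time coordinates. -/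
open MeasureTheory
open scoped ENNReal NNReal

section Aux

variable {m : ℕ}

lemma pcube_convex (c : EuclideanSpace ℝ (Fin m) × ℝ) (r : ℝ) :
    Convex ℝ (pcube c r) := by
  intro x hx y hy a b ha hb hab
  refine ⟨fun i => ?_, ?_⟩
  · have h1 := hx.1 i
    have h2 := hy.1 i
    rw [abs_lt] at h1 h2
    have hx' : x.1 i ∈ Set.Ioo (c.1 i - r) (c.1 i + r) := ⟨by linarith [h1.1], by linarith [h1.2]⟩
    have hy' : y.1 i ∈ Set.Ioo (c.1 i - r) (c.1 i + r) := ⟨by linarith [h2.1], by linarith [h2.2]⟩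
    have hm := (convex_Ioo (c.1 i - r) (c.1 i + r)) hx' hy' ha hb hab
    have heq : (a • x + b • y).1 i = a * x.1 i + b * y.1 i := by
      simp [Prod.smul_fst, Prod.fst_add]
    rw [heq, abs_lt]
    simp only [smul_eq_mul, Set.mem_Ioo] at hm
    exact ⟨by linarith [hm.1], by linarith [hm.2]⟩
  · have h1 := hx.2
    have h2 := hy.2
    rw [abs_lt] at h1 h2
    have hx' : x.2 ∈ Set.Ioo (c.2 - r ^ 2) (c.2 + r ^ 2) := ⟨by linarith [h1.1], by linarith [h1.2]⟩
    have hy' : y.2 ∈ Set.Ioo (c.2 - r ^ 2) (c.2 + r ^ 2) := ⟨by linarith [h2.1], by linarith [h2.2]⟩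
    have hm := (convex_Ioo (c.2 - r ^ 2) (c.2 + r ^ 2)) hx' hy' ha hb hab
    have heq : (a • x + b • y).2 = a * x.2 + b * y.2 := by
      simp [Prod.smul_snd, Prod.snd_add]
    rw [heq, abs_lt]
    simp only [smul_eq_mul, Set.mem_Ioo] at hm
    exact ⟨by linarith [hm.1], by linarith [hm.2]⟩

lemma halfspace_gt_convex (i : Fin m) (a : ℝ) :
    Convex ℝ {q : EuclideanSpace ℝ (Fin m) × ℝ | a < q.1 i} := by
  intro x hx y hy s t hs ht hst
  have hm := (convex_Ioi a) hx hy hs ht hst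
  have heq : (s • x + t • y).1 i = s * x.1 i + t * y.1 i := by
    simp [Prod.smul_fst, Prod.fst_add]
  simp only [Set.mem_setOf_eq, heq]
  simpa [smul_eq_mul] using hm

lemma halfspace_lt_convex (i : Fin m) (a : ℝ) :
    Convex ℝ {q : EuclideanSpace ℝ (Fin m) × ℝ | q.1 i < a} := by
  intro x hx y hy s t hs ht hst
  have hm := (convex_Iio a) hx hy hs ht hst
  have heq : (s • x + t • y).1 i = s * x.1 i + t * y.1 i := by
    simp [Prod.smul_fst, Prod.fst_add]
  simp only [Set.mem_setOf_eq, heq]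
  simpa [smul_eq_mul] using hm

lemma comp_eq_of_mem {α : Type*} [TopologicalSpace α] {F s : Set α}
    (hs : IsPreconnected s) (hsF : s ⊆ F) {x y : α} (hx : x ∈ s) (hy : y ∈ s) :
    connectedComponentIn F x = connectedComponentIn F y :=
  connectedComponentIn_eq (hs.subset_connectedComponentIn hx hsF hy)

lemma pcube_escape (c : EuclideanSpace ℝ (Fin (m + 1)) × ℝ) {ρ : ℝ} (hρ : 0 < ρ) :
    ∃ z ∈ pcube c ρ, ρ / 2 ≤ z.1 (Fin.last m) ∨ z.1 (Fin.last m) ≤ -(ρ / 2) := by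
  by_cases h : 0 ≤ c.1 (Fin.last m)
  · refine ⟨(c.1 + EuclideanSpace.single (Fin.last m) (ρ / 2), c.2), ⟨fun i => ?_, by
      simp only; rw [sub_self, abs_zero]; positivity⟩, Or.inl ?_⟩
    · show |(c.1 + EuclideanSpace.single (Fin.last m) (ρ / 2)) i - c.1 i| < ρ
      have heq : (c.1 + EuclideanSpace.single (Fin.last m) (ρ / 2)) i
          = c.1 i + EuclideanSpace.single (Fin.last m) (ρ / 2) i := rfl
      rw [heq, EuclideanSpace.single_apply]
      split_ifs
      · rw [add_sub_cancel_left, abs_of_pos (by positivity)]; linarith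
      · simpa using hρ
    · show ρ / 2 ≤ (c.1 + EuclideanSpace.single (Fin.last m) (ρ / 2)) (Fin.last m)
      have heq : (c.1 + EuclideanSpace.single (Fin.last m) (ρ / 2)) (Fin.last m)
          = c.1 (Fin.last m) + EuclideanSpace.single (Fin.last m) (ρ / 2) (Fin.last m) := rfl
      rw [heq, EuclideanSpace.single_apply, if_pos rfl]
      linarith
  · refine ⟨(c.1 + EuclideanSpace.single (Fin.last m) (-(ρ / 2)), c.2), ⟨fun i => ?_, by
      simp only; rw [sub_self, abs_zero]; positivity⟩, Or.inr ?_⟩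
    · show |(c.1 + EuclideanSpace.single (Fin.last m) (-(ρ / 2))) i - c.1 i| < ρ
      have heq : (c.1 + EuclideanSpace.single (Fin.last m) (-(ρ / 2))) i
          = c.1 i + EuclideanSpace.single (Fin.last m) (-(ρ / 2)) i := rfl
      rw [heq, EuclideanSpace.single_apply]
      split_ifs
      · rw [add_sub_cancel_left, abs_neg, abs_of_pos (by positivity)]; linarith
      · simpa using hρ
    · show (c.1 + EuclideanSpace.single (Fin.last m) (-(ρ / 2))) (Fin.last m) ≤ -(ρ / 2)
      have heq : (c.1 + EuclideanSpace.single (Fin.last m) (-(ρ / 2))) (Fin.last m)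
          = c.1 (Fin.last m) + EuclideanSpace.single (Fin.last m) (-(ρ / 2)) (Fin.last m) := rfl
      rw [heq, EuclideanSpace.single_apply, if_pos rfl]
      linarith

end Aux

/-- weak time-synchronized corkscrews from flatness plus two-sided
corkscrews. If the closed set `S ⊆ ℝ^{n+1} × ℝ` satisfies the two-sided corkscrew
condition with constant `γ₀ ∈ (0,1)`, contains the origin (after translation), and
`S ∩ Q_{10r₁}(0,0)` lies within parabolic distance `εr₁` of the hyperplane
`{y_{last} = 0}` (after rotation), where `ε < min 1 (γ₀/20)`, then the cubes
`Q⁺ = Q_{r₁}(0, 3r₁, 0)` and `Q⁻ = Q_{r₁}(0, -3r₁, 0)` are disjoint from `S` and lie in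
distinct connected components of the complement of `S`; their centers have equal time
coordinate `0`. -/
theorem weak_sync_corkscrews_from_flatness (n : ℕ) (γ₀ ε r₁ : ℝ)
    (S : Set (EuclideanSpace ℝ (Fin (n + 1)) × ℝ)) (hS : IsClosed S)
    (hγ0 : 0 < γ₀) (hγ1 : γ₀ < 1)
    (hcork : ∀ p ∈ S, ∀ r : ℝ, 0 < r → ENNReal.ofReal r < pdiamS S →
      ∃ (c₁ c₂ : EuclideanSpace ℝ (Fin (n + 1)) × ℝ) (ρ : ℝ),
        γ₀ * r ≤ ρ ∧ ρ < r ∧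
        pcube c₁ ρ ⊆ pcube p r ∧ pcube c₂ ρ ⊆ pcube p r ∧
        pcube c₁ ρ ⊆ Sᶜ ∧ pcube c₂ ρ ⊆ Sᶜ ∧
        ∀ x ∈ pcube c₁ ρ, ∀ y ∈ pcube c₂ ρ,
          connectedComponentIn Sᶜ x ≠ connectedComponentIn Sᶜ y)
    (hr₁ : 0 < r₁) (hdiam : ENNReal.ofReal (10 * r₁) < pdiamS S)
    (h0 : ((0 : EuclideanSpace ℝ (Fin (n + 1))), (0 : ℝ)) ∈ S)
    (hε : 0 < ε) (hεlt : ε < min 1 (γ₀ / 20))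
    (hflat : ∀ q ∈ S ∩ pcube ((0 : EuclideanSpace ℝ (Fin (n + 1))), (0 : ℝ)) (10 * r₁),
      |q.1 (Fin.last n)| < ε * r₁) :
    pcube (EuclideanSpace.single (Fin.last n) (3 * r₁), (0 : ℝ)) r₁ ⊆ Sᶜ ∧
    pcube (EuclideanSpace.single (Fin.last n) (-(3 * r₁)), (0 : ℝ)) r₁ ⊆ Sᶜ ∧
    ∀ p ∈ pcube (EuclideanSpace.single (Fin.last n) (3 * r₁), (0 : ℝ)) r₁,
      ∀ q ∈ pcube (EuclideanSpace.single (Fin.last n) (-(3 * r₁)), (0 : ℝ)) r₁,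
        connectedComponentIn Sᶜ p ≠ connectedComponentIn Sᶜ q := by
  have hε1 : ε < 1 := lt_of_lt_of_le hεlt (min_le_left _ _)
  have hεγ : ε < γ₀ / 20 := lt_of_lt_of_le hεlt (min_le_right _ _)
  set O : EuclideanSpace ℝ (Fin (n + 1)) × ℝ := ((0 : EuclideanSpace ℝ (Fin (n + 1))), (0 : ℝ))
    with hO
  set Tp : Set (EuclideanSpace ℝ (Fin (n + 1)) × ℝ) :=
    pcube O (10 * r₁) ∩ {q | ε * r₁ < q.1 (Fin.last n)} with hTp
  set Tm : Set (EuclideanSpace ℝ (Fin (n + 1)) × ℝ) :=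
    pcube O (10 * r₁) ∩ {q | q.1 (Fin.last n) < -(ε * r₁)} with hTm
  have hTpS : Tp ⊆ Sᶜ := by
    rintro q ⟨hq1, hq2⟩ hqS
    have := hflat q ⟨hqS, hq1⟩
    have h2 := le_abs_self (q.1 (Fin.last n))
    simp only [Set.mem_setOf_eq] at hq2
    linarith
  have hTmS : Tm ⊆ Sᶜ := by
    rintro q ⟨hq1, hq2⟩ hqS
    have := hflat q ⟨hqS, hq1⟩
    have h2 := neg_abs_le (q.1 (Fin.last n))
    simp only [Set.mem_setOf_eq] at hq2
    linarith
  have hQpT : pcube (EuclideanSpace.single (Fin.last n) (3 * r₁), (0 : ℝ)) r₁ ⊆ Tp := by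
    rintro q ⟨hq1, hq2⟩
    have hlast := hq1 (Fin.last n)
    simp only [EuclideanSpace.single_apply, reduceIte] at hlast
    rw [abs_lt] at hlast
    refine ⟨⟨fun i => ?_, ?_⟩, ?_⟩
    · by_cases hi : i = Fin.last n
      · subst hi
        have : (O.1 : EuclideanSpace ℝ (Fin (n + 1))) (Fin.last n) = 0 := rfl
        rw [this, abs_lt]
        constructor <;> linarith
      · have h := hq1 i
        simp only [EuclideanSpace.single_apply, if_neg hi] at h
        have : (O.1 : EuclideanSpace ℝ (Fin (n + 1))) i = 0 := rfl
        rw [this, sub_zero]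
        rw [sub_zero] at h
        rw [abs_lt] at h ⊢
        constructor <;> linarith
    · have : (O.2 : ℝ) = 0 := rfl
      rw [this]
      rw [abs_lt] at hq2 ⊢
      constructor <;> nlinarith
    · simp only [Set.mem_setOf_eq]
      nlinarith
  have hQmT : pcube (EuclideanSpace.single (Fin.last n) (-(3 * r₁)), (0 : ℝ)) r₁ ⊆ Tm := by
    rintro q ⟨hq1, hq2⟩
    have hlast := hq1 (Fin.last n)
    simp only [EuclideanSpace.single_apply, reduceIte] at hlast
    rw [abs_lt] at hlast
    refine ⟨⟨fun i => ?_, ?_⟩, ?_⟩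
    · by_cases hi : i = Fin.last n
      · subst hi
        have : (O.1 : EuclideanSpace ℝ (Fin (n + 1))) (Fin.last n) = 0 := rfl
        rw [this, abs_lt]
        constructor <;> linarith
      · have h := hq1 i
        simp only [EuclideanSpace.single_apply, if_neg hi] at h
        have : (O.1 : EuclideanSpace ℝ (Fin (n + 1))) i = 0 := rfl
        rw [this, sub_zero]
        rw [sub_zero] at h
        rw [abs_lt] at h ⊢
        constructor <;> linarith
    · have : (O.2 : ℝ) = 0 := rfl
      rw [this]
      rw [abs_lt] at hq2 ⊢
      constructor <;> nlinarith
    · simp only [Set.mem_setOf_eq]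
      nlinarith
  refine ⟨hQpT.trans hTpS, hQmT.trans hTmS, ?_⟩
  -- apply the corkscrew condition at the origin at scale 10 r₁
  obtain ⟨c₁, c₂, ρ, hρ₁, hρ₂, hsub₁, hsub₂, hdisj₁, hdisj₂, hsep⟩ :=
    hcork O h0 (10 * r₁) (by linarith) hdiam
  have hρpos : 0 < ρ := lt_of_lt_of_le (by positivity) hρ₁
  have hρε : ε * r₁ < ρ / 2 := by nlinarith
  -- each corkscrew cube contains a point in Tp ∪ Tm
  have escape : ∀ (c : EuclideanSpace ℝ (Fin (n + 1)) × ℝ),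
      pcube c ρ ⊆ pcube O (10 * r₁) → ∃ z ∈ pcube c ρ, z ∈ Tp ∨ z ∈ Tm := by
    intro c hsub
    obtain ⟨z, hz, hside⟩ := pcube_escape c hρpos
    refine ⟨z, hz, ?_⟩
    rcases hside with h | h
    · exact Or.inl ⟨hsub hz, by simp only [Set.mem_setOf_eq]; linarith⟩
    · exact Or.inr ⟨hsub hz, by simp only [Set.mem_setOf_eq]; linarith⟩
  obtain ⟨z₁, hz₁, hside₁⟩ := escape c₁ hsub₁
  obtain ⟨z₂, hz₂, hside₂⟩ := escape c₂ hsub₂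
  -- connectedness facts
  have hTp_conn : IsPreconnected Tp :=
    ((pcube_convex O (10 * r₁)).inter (halfspace_gt_convex _ _)).isPreconnected
  have hTm_conn : IsPreconnected Tm :=
    ((pcube_convex O (10 * r₁)).inter (halfspace_lt_convex _ _)).isPreconnected
  intro p hp q hq hpq
  have hpTp : p ∈ Tp := hQpT hp
  have hqTm : q ∈ Tm := hQmT hq
  rcases hside₁ with h1 | h1 <;> rcases hside₂ with h2 | h2
  · -- both corkscrew points in Tp : contradicts separation
    exact hsep z₁ hz₁ z₂ hz₂ (comp_eq_of_mem hTp_conn hTpS h1 h2)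
  · -- z₁ ∈ Tp, z₂ ∈ Tm
    have e1 : connectedComponentIn Sᶜ p = connectedComponentIn Sᶜ z₁ :=
      comp_eq_of_mem hTp_conn hTpS hpTp h1
    have e2 : connectedComponentIn Sᶜ q = connectedComponentIn Sᶜ z₂ :=
      comp_eq_of_mem hTm_conn hTmS hqTm h2
    exact hsep z₁ hz₁ z₂ hz₂ (e1 ▸ e2 ▸ hpq)
  · -- z₁ ∈ Tm, z₂ ∈ Tp
    have e1 : connectedComponentIn Sᶜ q = connectedComponentIn Sᶜ z₁ :=
      comp_eq_of_mem hTm_conn hTmS hqTm h1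
    have e2 : connectedComponentIn Sᶜ p = connectedComponentIn Sᶜ z₂ :=
      comp_eq_of_mem hTp_conn hTpS hpTp h2
    exact hsep z₁ hz₁ z₂ hz₂ (e1 ▸ e2 ▸ hpq.symm)
  · -- both in Tm : contradicts separation
    exact hsep z₁ hz₁ z₂ hz₂ (comp_eq_of_mem hTm_conn hTmS h1 h2)
end

section
/- The function ψ(t) = |t|^{1/2} satisfies the Strichartz regularity (Carleson measure) condition: there is a finite constant C such that sup over a ∈ ℝ and h > 0 of h^{-1} ∫_{a-h}^{a+h} ∫_{a-h}^{a+h} |ψ(t) - ψ(s)|² / |t-s|² ds dt ≤ C. -/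
/-! For `t, s ≠ 0` put `u = √|t|`, `v = √|s|`; then
`(u - v)² u v ≤ (u - v)² (u + v)² = (|t| - |s|)² ≤ |t - s|²`, so the integrand is at most
`|t|^{-1/2} |s|^{-1/2}` and the double integral is at most `(∫_{a-h}^{a+h} |t|^{-1/2} dt)²`.
This single integral is `O(√h)`: if `|a| ≤ 2h` the interval lies in `(-3h, 3h)`, over which the
integral equals `4√(3h)`; otherwise `|t| ≥ h` on the interval and the integrand is at most
`h^{-1/2}`. -/

open MeasureTheory Set

theorem sqrt_abs_sub_sqrt_abs_sq_div_le {t s : ℝ} (ht : t ≠ 0) (hs : s ≠ 0) :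
    (√|t| - √|s|) ^ 2 / |t - s| ^ 2 ≤ (√|t|)⁻¹ * (√|s|)⁻¹ := by
  rcases eq_or_ne t s with rfl | hts
  · simp only [sub_self, abs_zero, zero_pow two_ne_zero, div_zero]
    positivity
  have hu : 0 < √|t| := Real.sqrt_pos.2 (abs_pos.2 ht)
  have hv : 0 < √|s| := Real.sqrt_pos.2 (abs_pos.2 hs)
  have key : (√|t| - √|s|) ^ 2 * (√|t| * √|s|) ≤ |t - s| ^ 2 :=
    calc (√|t| - √|s|) ^ 2 * (√|t| * √|s|)
        ≤ (√|t| - √|s|) ^ 2 * (√|t| + √|s|) ^ 2 := by gcongr; nlinarith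
      _ = (|t| - |s|) ^ 2 := by
        rw [← mul_pow]
        congr 1
        linear_combination Real.sq_sqrt (abs_nonneg t) - Real.sq_sqrt (abs_nonneg s)
      _ ≤ |t - s| ^ 2 := by
        rw [← sq_abs (|t| - |s|)]
        exact pow_le_pow_left₀ (abs_nonneg _) (abs_abs_sub_abs_le_abs_sub t s) 2
  rw [div_le_iff₀ (pow_pos (abs_pos.2 (sub_ne_zero.2 hts)) 2)]
  calc (√|t| - √|s|) ^ 2 = (√|t|)⁻¹ * (√|s|)⁻¹ * ((√|t| - √|s|) ^ 2 * (√|t| * √|s|)) := by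
        field_simp
    _ ≤ (√|t|)⁻¹ * (√|s|)⁻¹ * |t - s| ^ 2 := by gcongr

theorem integral_integral_le_sq_integral {α : Type*} [MeasurableSpace α] {μ : Measure α}
    {K : α → α → ℝ} {f : α → ℝ} (hK : ∀ t s, 0 ≤ K t s) (hf : Integrable f μ)
    (hKf : ∀ᵐ t ∂μ, ∀ᵐ s ∂μ, K t s ≤ f t * f s) :
    ∫ t, ∫ s, K t s ∂μ ∂μ ≤ (∫ t, f t ∂μ) ^ 2 := by
  calc ∫ t, ∫ s, K t s ∂μ ∂μ ≤ ∫ t, f t * ∫ s, f s ∂μ ∂μ := by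
        refine integral_mono_of_nonneg (.of_forall fun t => integral_nonneg (hK t))
          (hf.mul_const _) ?_
        filter_upwards [hKf] with t ht
        rw [← integral_const_mul]
        exact integral_mono_of_nonneg (.of_forall (hK t)) (hf.const_mul _) ht
    _ = (∫ t, f t ∂μ) ^ 2 := by rw [integral_mul_const, sq]

theorem locallyIntegrable_inv_sqrt_abs : LocallyIntegrable (fun t : ℝ => (√|t|)⁻¹) := by
  refine locallyIntegrable_of_norm_le_rpow (μ := volume) (C := 1) (α := 1 / 2) (by simp)
    (by norm_num) (.of_forall fun t => ?_) (by fun_prop)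
  rw [one_mul, Real.norm_eq_abs, Real.norm_eq_abs, abs_inv, abs_of_nonneg (Real.sqrt_nonneg _),
    Real.sqrt_eq_rpow, Real.rpow_neg (abs_nonneg t)]

theorem intervalIntegrable_inv_sqrt_abs (a b : ℝ) :
    IntervalIntegrable (fun t : ℝ => (√|t|)⁻¹) volume a b :=
  (locallyIntegrable_inv_sqrt_abs.integrableOn_isCompact isCompact_uIcc).intervalIntegrable

theorem integral_inv_sqrt_abs {c : ℝ} (hc : 0 ≤ c) : ∫ t in -c..c, (√|t|)⁻¹ = 4 * √c := by
  have half : ∫ t in 0..c, (√|t|)⁻¹ = 2 * √c := by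
    rw [intervalIntegral.integral_congr (g := fun t => t ^ (-(1 / 2) : ℝ)) fun t ht => ?_,
      integral_rpow (by norm_num)]
    · norm_num [Real.sqrt_eq_rpow]
      ring
    · have ht : 0 ≤ t := (uIcc_of_le hc ▸ ht).1
      rw [abs_of_nonneg ht, Real.sqrt_eq_rpow, ← Real.rpow_neg ht]
  have reflect : ∫ t in -c..0, (√|t|)⁻¹ = ∫ t in 0..c, (√|t|)⁻¹ := by
    simpa using (intervalIntegral.integral_comp_neg (a := 0) (b := c) fun t => (√|t|)⁻¹).symm
  rw [← intervalIntegral.integral_add_adjacent_intervals (intervalIntegrable_inv_sqrt_abs _ 0)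
    (intervalIntegrable_inv_sqrt_abs 0 _), reflect, half]
  ring

theorem integral_Ioo_inv_sqrt_abs_le (a : ℝ) {h : ℝ} (hh : 0 < h) :
    ∫ t in Ioo (a - h) (a + h), (√|t|)⁻¹ ≤ 4 * √(3 * h) := by
  rcases le_or_gt |a| (2 * h) with hnear | hfar
  · have hsub : Ioo (a - h) (a + h) ⊆ Ioo (-(3 * h)) (3 * h) := by
      obtain ⟨ha₁, ha₂⟩ := abs_le.1 hnear
      exact Ioo_subset_Ioo (by linarith) (by linarith)
    calc ∫ t in Ioo (a - h) (a + h), (√|t|)⁻¹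
        ≤ ∫ t in Ioo (-(3 * h)) (3 * h), (√|t|)⁻¹ :=
          setIntegral_mono_set ((intervalIntegrable_inv_sqrt_abs _ _).1.mono_set
              Ioo_subset_Ioc_self)
            (.of_forall fun t => by positivity) hsub.eventuallyLE
      _ = 4 * √(3 * h) := by
        rw [← integral_Ioc_eq_integral_Ioo, ← intervalIntegral.integral_of_le (by linarith),
          integral_inv_sqrt_abs (by linarith)]
  · have hbound : ∀ t ∈ Ioo (a - h) (a + h), ‖(√|t|)⁻¹‖ ≤ (√h)⁻¹ := by
      intro t ⟨ht₁, ht₂⟩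
      have hat : |a - t| < h := abs_sub_lt_iff.2 ⟨by linarith, by linarith⟩
      have hht : h ≤ |t| := by linarith [abs_sub_abs_le_abs_sub a t]
      rw [Real.norm_of_nonneg (by positivity)]
      gcongr
    calc ∫ t in Ioo (a - h) (a + h), (√|t|)⁻¹
        ≤ (√h)⁻¹ * volume.real (Ioo (a - h) (a + h)) :=
          (Real.le_norm_self _).trans
            (norm_setIntegral_le_of_norm_le_const measure_Ioo_lt_top hbound)
      _ = 2 * √h := by
        rw [Real.volume_real_Ioo_of_le (by linarith),
          show a + h - (a - h) = 2 * √h ^ 2 by rw [Real.sq_sqrt hh.le]; ring]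
        field_simp
      _ ≤ 4 * √(3 * h) := by gcongr <;> linarith

/-- the function `ψ(t) = |t|^{1/2}` satisfies the Strichartz regularity
(Carleson measure) condition: there is a finite constant `C` with
`h⁻¹ ∫_{a-h}^{a+h} ∫_{a-h}^{a+h} |ψ(t)-ψ(s)|²/|t-s|² ds dt ≤ C` for all `a ∈ ℝ`, `h > 0`. -/
theorem sqrt_abs_strichartz_condition :
    ∃ C : ℝ, ∀ a h : ℝ, 0 < h →
      (1 / h) * ∫ t in Set.Ioo (a - h) (a + h),
          ∫ s in Set.Ioo (a - h) (a + h),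
            (Real.sqrt |t| - Real.sqrt |s|) ^ 2 / |t - s| ^ 2 ≤ C := by
  refine ⟨48, fun a h hh => ?_⟩
  have hint : IntegrableOn (fun t : ℝ => (√|t|)⁻¹) (Ioo (a - h) (a + h)) :=
    (intervalIntegrable_inv_sqrt_abs _ _).1.mono_set Ioo_subset_Ioc_self
  have hne := ae_restrict_of_ae (s := Ioo (a - h) (a + h)) (Measure.ae_ne volume 0)
  have hdouble := integral_integral_le_sq_integral
    (fun t s => div_nonneg (sq_nonneg (√|t| - √|s|)) (sq_nonneg |t - s|)) hint
    (by filter_upwards [hne] with t ht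
        filter_upwards [hne] with s hs
        exact sqrt_abs_sub_sqrt_abs_sq_div_le ht hs)
  have hsingle := integral_Ioo_inv_sqrt_abs_le a hh
  calc (1 / h) * ∫ t in Ioo (a - h) (a + h), ∫ s in Ioo (a - h) (a + h),
        (√|t| - √|s|) ^ 2 / |t - s| ^ 2
      ≤ (1 / h) * (4 * √(3 * h)) ^ 2 := by
        gcongr
        exact hdouble.trans (pow_le_pow_left₀ (integral_nonneg fun t => by positivity) hsingle 2)
    _ = 48 := by
      rw [mul_pow, Real.sq_sqrt (by positivity)]
      field_simp
      ring
end

section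
/- Hölder/averaging lemma used in the beta-number summation: let (𝒬, σ) be a finite measure space with σ(𝒬) > 0, let g ≥ 0 be measurable, let N : 𝒬 → [1, ∞] be measurable with average ⨍_𝒬 N dσ ≤ A < ∞, and let h := ess inf_𝒬 g. Then h² σ(𝒬) ≤ A² ∫_𝒬 g² N^{-2} dσ (interpreting N^{-2} = 0 where N = ∞). -/
/-!
Hölder's inequality with exponents `3` and `3/2`, applied to `1 = N^{-2/3} N^{2/3}`, gives
`μ(𝒬)³ ≤ (∫ N⁻²) (∫ N)² ≤ (∫ N⁻²) A² μ(𝒬)²`, that is `μ(𝒬) ≤ A² ∫ N⁻²`.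
Multiplying by `(ess inf g)²` and using `ess inf g ≤ g` almost everywhere gives the claim.
-/

open MeasureTheory
open scoped ENNReal

namespace MeasureTheory

variable {α : Type*} [MeasurableSpace α] {μ : Measure α} {N : α → ℝ≥0∞}

theorem measure_univ_pow_three_le_lintegral_inv_sq_mul (hN : Measurable N)
    (hN0 : ∀ᵐ x ∂μ, N x ≠ 0) (hNtop : ∀ᵐ x ∂μ, N x ≠ ∞) :
    μ Set.univ ^ 3 ≤ (∫⁻ x, (N x)⁻¹ ^ 2 ∂μ) * (∫⁻ x, N x ∂μ) ^ 2 := by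
  have hpq : (3 : ℝ).HolderConjugate (3 / 2) := by
    rw [Real.holderConjugate_iff]; norm_num
  have hmul : ∀ᵐ x ∂μ, (N x)⁻¹ ^ (2 / 3 : ℝ) * N x ^ (2 / 3 : ℝ) = 1 := by
    filter_upwards [hN0, hNtop] with x hx0 hxtop
    rw [← ENNReal.mul_rpow_of_ne_top (ENNReal.inv_ne_top.mpr hx0) hxtop,
      ENNReal.inv_mul_cancel hx0 hxtop, ENNReal.one_rpow]
  have holder : μ Set.univ ≤
      (∫⁻ x, (N x)⁻¹ ^ 2 ∂μ) ^ (1 / 3 : ℝ) * (∫⁻ x, N x ∂μ) ^ (2 / 3 : ℝ) := by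
    calc μ Set.univ = ∫⁻ x, (N x)⁻¹ ^ (2 / 3 : ℝ) * N x ^ (2 / 3 : ℝ) ∂μ := by
          rw [lintegral_congr_ae hmul, lintegral_one]
      _ ≤ (∫⁻ x, ((N x)⁻¹ ^ (2 / 3 : ℝ)) ^ (3 : ℝ) ∂μ) ^ (1 / 3 : ℝ) *
          (∫⁻ x, (N x ^ (2 / 3 : ℝ)) ^ (3 / 2 : ℝ) ∂μ) ^ (1 / (3 / 2) : ℝ) :=
        ENNReal.lintegral_mul_le_Lp_mul_Lq μ hpq (hN.inv.pow_const _).aemeasurable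
          (hN.pow_const _).aemeasurable
      _ = (∫⁻ x, (N x)⁻¹ ^ 2 ∂μ) ^ (1 / 3 : ℝ) * (∫⁻ x, N x ∂μ) ^ (2 / 3 : ℝ) := by
        simp_rw [← ENNReal.rpow_mul, ← ENNReal.rpow_natCast]
        norm_num
  calc μ Set.univ ^ 3 = μ Set.univ ^ (3 : ℝ) := (ENNReal.rpow_natCast _ 3).symm
    _ ≤ ((∫⁻ x, (N x)⁻¹ ^ 2 ∂μ) ^ (1 / 3 : ℝ) * (∫⁻ x, N x ∂μ) ^ (2 / 3 : ℝ)) ^ (3 : ℝ) := by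
      gcongr
    _ = (∫⁻ x, (N x)⁻¹ ^ 2 ∂μ) * (∫⁻ x, N x ∂μ) ^ 2 := by
      rw [ENNReal.mul_rpow_of_nonneg _ _ (by norm_num), ← ENNReal.rpow_mul, ← ENNReal.rpow_mul]
      norm_num

theorem measure_univ_le_sq_mul_lintegral_inv_sq [IsFiniteMeasure μ] (hN : Measurable N)
    (hN0 : ∀ᵐ x ∂μ, N x ≠ 0) {A : ℝ≥0∞} (hA : A ≠ ∞)
    (havg : ∫⁻ x, N x ∂μ ≤ A * μ Set.univ) :
    μ Set.univ ≤ A ^ 2 * ∫⁻ x, (N x)⁻¹ ^ 2 ∂μ := by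
  rcases eq_or_ne (μ Set.univ) 0 with hμ | hμ
  · simp [hμ]
  have hNtop : ∀ᵐ x ∂μ, N x ≠ ∞ :=
    (ae_lt_top hN (ne_top_of_le_ne_top (ENNReal.mul_ne_top hA (measure_ne_top μ _)) havg)).mono
      fun _ => ne_of_lt
  have hcube : μ Set.univ * μ Set.univ ^ 2 ≤ (A ^ 2 * ∫⁻ x, (N x)⁻¹ ^ 2 ∂μ) * μ Set.univ ^ 2 :=
    calc μ Set.univ * μ Set.univ ^ 2 = μ Set.univ ^ 3 := by ring
      _ ≤ (∫⁻ x, (N x)⁻¹ ^ 2 ∂μ) * (∫⁻ x, N x ∂μ) ^ 2 :=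
        measure_univ_pow_three_le_lintegral_inv_sq_mul hN hN0 hNtop
      _ ≤ (∫⁻ x, (N x)⁻¹ ^ 2 ∂μ) * (A * μ Set.univ) ^ 2 := by gcongr
      _ = (A ^ 2 * ∫⁻ x, (N x)⁻¹ ^ 2 ∂μ) * μ Set.univ ^ 2 := by ring
  exact (ENNReal.mul_le_mul_iff_left (pow_ne_zero 2 hμ)
    (ENNReal.pow_ne_top (measure_ne_top μ _))).mp hcube

end MeasureTheory

theorem essInf_sq_le_holder_general {α : Type*} [MeasurableSpace α] (μ : Measure α)
    [IsFiniteMeasure μ] (g N : α → ℝ≥0∞)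
    (hN : Measurable N) (hN1 : ∀ x, 1 ≤ N x)
    (A : ℝ≥0∞) (hA : A ≠ ∞) (havg : ∫⁻ x, N x ∂μ ≤ A * μ Set.univ) :
    (essInf g μ) ^ 2 * μ Set.univ ≤ A ^ 2 * ∫⁻ x, g x ^ 2 * (N x)⁻¹ ^ 2 ∂μ := by
  have hN0 : ∀ᵐ x ∂μ, N x ≠ 0 :=
    .of_forall fun x => (zero_lt_one.trans_le (hN1 x)).ne'
  calc essInf g μ ^ 2 * μ Set.univ
      ≤ essInf g μ ^ 2 * (A ^ 2 * ∫⁻ x, (N x)⁻¹ ^ 2 ∂μ) := by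
        gcongr; exact measure_univ_le_sq_mul_lintegral_inv_sq hN hN0 hA havg
    _ = A ^ 2 * ∫⁻ x, essInf g μ ^ 2 * (N x)⁻¹ ^ 2 ∂μ := by
        rw [lintegral_const_mul (f := fun x => (N x)⁻¹ ^ 2) _ (hN.inv.pow_const 2)]; ring
    _ ≤ A ^ 2 * ∫⁻ x, g x ^ 2 * (N x)⁻¹ ^ 2 ∂μ := by
        gcongr A ^ 2 * ?_
        refine lintegral_mono_ae ?_
        filter_upwards [ae_essInf_le (f := g) (μ := μ)] with x hx
        gcongr

/-- Hölder/averaging lemma used in the beta-number summation. On a finite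
measure space of positive measure, if `N ≥ 1` has average at most `A < ∞` and
`h = ess inf g`, then `h² μ(𝒬) ≤ A² ∫ g² N⁻² dμ` (with `N⁻² = 0` where `N = ∞`). -/
theorem essInf_sq_le_holder {α : Type*} [MeasurableSpace α] (μ : Measure α)
    [IsFiniteMeasure μ] (hμ : 0 < μ Set.univ) (g N : α → ℝ≥0∞)
    (hg : Measurable g) (hN : Measurable N) (hN1 : ∀ x, 1 ≤ N x)
    (A : ℝ≥0∞) (hA : A ≠ ∞) (havg : ∫⁻ x, N x ∂μ ≤ A * μ Set.univ) :
    (essInf g μ) ^ 2 * μ Set.univ ≤ A ^ 2 * ∫⁻ x, g x ^ 2 * (N x)⁻¹ ^ 2 ∂μ :=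
  essInf_sq_le_holder_general μ g N hN hN1 A hA havg
end
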